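/- arXiv:quant-ph/0208115 — 2 statements merged into one kernel-verified Lean document; each statement's English description precedes it below -/
import Mathlib

section
/- For a pure compound state ω = ψψ† on ℂ^m ⊗ ℂ^n with reduced state ρ = Tr_2(ω), the entangled entropy E = Tr ω log( ω^{1/2}(ρ⁻ ⊗ I)ω^{1/2} ) equals log(rank ρ), which is nonnegative, and is strictly positive iff the Schmidt rank of ψ exceeds 1. -/
open Matrix Kronecker
open scoped ComplexOrder

noncomputable section
open Classical

/-- Hermitian functional calculus, extended by junk value `0` to non-Hermitian matrices. -/
def matCFC {d : Type*} [Fintype d] [DecidableEq d] (f : ℝ → ℝ)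
    (A : Matrix d d ℂ) : Matrix d d ℂ :=
  if h : A.IsHermitian then h.cfc f else 0

/-- Matrix logarithm (spectral, with `Real.log 0 = 0` on the kernel). -/
def matLog {d : Type*} [Fintype d] [DecidableEq d] (A : Matrix d d ℂ) : Matrix d d ℂ :=
  matCFC Real.log A

/-- Moore–Penrose pseudoinverse of a Hermitian matrix (junk value `0` otherwise). -/
def matPinv {d : Type*} [Fintype d] [DecidableEq d] (A : Matrix d d ℂ) : Matrix d d ℂ :=
  matCFC (·⁻¹) A

/-- Positive square root of a positive semidefinite matrix (junk value `0` otherwise). -/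
def matSqrt {d : Type*} [Fintype d] [DecidableEq d] (A : Matrix d d ℂ) : Matrix d d ℂ :=
  if h : A.PosSemidef then
    (h.1.eigenvectorUnitary : Matrix d d ℂ) * diagonal ((↑) ∘ (√·) ∘ h.1.eigenvalues) *
      (star h.1.eigenvectorUnitary : Matrix d d ℂ)
  else 0

/-- von Neumann entropy `-∑ λᵢ log λᵢ` (junk value `0` for non-Hermitian matrices). -/
def vN {d : Type*} [Fintype d] [DecidableEq d] (A : Matrix d d ℂ) : ℝ :=
  if h : A.IsHermitian then -∑ i, (h.eigenvalues i) * Real.log (h.eigenvalues i) else 0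

/-- Belavkin–Staszewski relative entropy `Tr ω log(ω^{1/2} φ⁻ ω^{1/2})`. -/
def RBS {d : Type*} [Fintype d] [DecidableEq d] (ω φ : Matrix d d ℂ) : ℝ :=
  ((ω * matLog (matSqrt ω * matPinv φ * matSqrt ω)).trace).re

/-- Partial trace over the second tensor factor. -/
def ptraceR {m n : Type*} [Fintype m] [Fintype n]
    (M : Matrix (m × n) (m × n) ℂ) : Matrix m m ℂ :=
  Matrix.of fun i j => ∑ k, M (i, k) (j, k)

/-- Partial trace over the first tensor factor. -/
def ptraceL {m n : Type*} [Fintype m] [Fintype n]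
    (M : Matrix (m × n) (m × n) ℂ) : Matrix n n ℂ :=
  Matrix.of fun k l => ∑ i, M (i, k) (i, l)


/-!
For `ρ = Tr₂ (ψ ψ†)` the quadratic form `ψ† (A ⊗ I) ψ` equals `Tr (A ρ)`. Taking `A = ρ⁻`,
functional calculus gives `ρ⁻ ρ = f(ρ)` with `f x = x⁻¹ x`, the indicator of `x ≠ 0`, so its trace
counts the nonzero eigenvalues of `ρ`, which is `rank ρ` (the Schmidt rank of `ψ`).
-/

theorem isHermitian_ptraceR {m n : Type*} [Fintype m] [Fintype n]
    {M : Matrix (m × n) (m × n) ℂ} (hM : M.IsHermitian) : (ptraceR M).IsHermitian := by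
  ext i j
  simp only [conjTranspose_apply, ptraceR, of_apply, star_sum]
  exact Finset.sum_congr rfl fun k _ => congrFun (congrFun hM (i, k)) (j, k)

theorem dotProduct_kronecker_one_mulVec {m n : Type*} [Fintype m] [Fintype n] [DecidableEq n]
    (ψ : m × n → ℂ) (A : Matrix m m ℂ) :
    star ψ ⬝ᵥ ((A ⊗ₖ (1 : Matrix n n ℂ)) *ᵥ ψ) = (A * ptraceR (vecMulVec ψ (star ψ))).trace := by
  simp only [dotProduct, mulVec, trace, diag, mul_apply, ptraceR, vecMulVec_apply, of_apply,
    kroneckerMap_apply, one_apply, Fintype.sum_prod_type, Pi.star_apply, ite_mul, zero_mul,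
    mul_ite, mul_zero, Finset.sum_ite_eq, Finset.mem_univ, if_true, Finset.mul_sum]
  refine Finset.sum_congr rfl fun i _ => ?_
  rw [Finset.sum_comm]
  exact Finset.sum_congr rfl fun j _ => Finset.sum_congr rfl fun k _ => by ring

namespace Matrix.IsHermitian

variable {d : Type*} [Fintype d] [DecidableEq d]

theorem trace_cfc {𝕜 : Type*} [RCLike 𝕜] {A : Matrix d d 𝕜} (hA : A.IsHermitian) (f : ℝ → ℝ) :
    (hA.cfc f).trace = ∑ i, (f (hA.eigenvalues i) : 𝕜) := by
  rw [IsHermitian.cfc, Unitary.conjStarAlgAut_apply, trace_mul_comm, ← Matrix.mul_assoc,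
    Unitary.star_mul_self_of_mem hA.eigenvectorUnitary.2, Matrix.one_mul, trace_diagonal]
  rfl

theorem matPinv_mul_self {A : Matrix d d ℂ} (hA : A.IsHermitian) :
    matPinv A * A = hA.cfc (fun x => x⁻¹ * x) := by
  have hfin := Matrix.finite_real_spectrum (A := A)
  rw [matPinv, matCFC, dif_pos hA, ← hA.cfc_eq, ← hA.cfc_eq,
    cfc_mul _ _ A (hfin.continuousOn _) (hfin.continuousOn _)]
  congr 1
  exact (cfc_id' ℝ A hA).symm

theorem trace_matPinv_mul_self {A : Matrix d d ℂ} (hA : A.IsHermitian) :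
    (matPinv A * A).trace = A.rank := by
  rw [hA.matPinv_mul_self, hA.trace_cfc, hA.rank_eq_card_non_zero_eigs, Fintype.card_subtype,
    ← Finset.sum_boole]
  refine Finset.sum_congr rfl fun i _ => ?_
  by_cases h : hA.eigenvalues i = 0 <;> simp [h]

end Matrix.IsHermitian

theorem stmt5_general {m n : ℕ} (ψ : Fin m × Fin n → ℂ)
    (ρ : Matrix (Fin m) (Fin m) ℂ)
    (hρdef : ρ = ptraceR (Matrix.of fun p q => ψ p * star (ψ q))) :
    Real.log ((star ψ ⬝ᵥ ((matPinv ρ ⊗ₖ (1 : Matrix (Fin n) (Fin n) ℂ)) *ᵥ ψ)).re) =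
      Real.log ρ.rank ∧
    0 ≤ Real.log ρ.rank ∧
    (0 < Real.log ρ.rank ↔ 1 < ρ.rank) := by
  have hρ : ρ = ptraceR (vecMulVec ψ (star ψ)) := hρdef
  have hρherm : ρ.IsHermitian := hρ ▸ isHermitian_ptraceR (posSemidef_vecMulVec_self_star ψ).1
  have hform : star ψ ⬝ᵥ ((matPinv ρ ⊗ₖ (1 : Matrix (Fin n) (Fin n) ℂ)) *ᵥ ψ) = ρ.rank := by
    rw [dotProduct_kronecker_one_mulVec, ← hρ, hρherm.trace_matPinv_mul_self]
  exact ⟨by rw [hform, Complex.natCast_re], Real.log_natCast_nonneg _,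
    (Real.log_pos_iff (Nat.cast_nonneg _)).trans Nat.one_lt_cast⟩

theorem stmt5 {m n : ℕ} (ψ : Fin m × Fin n → ℂ) (hψ : ∑ p, ‖ψ p‖ ^ 2 = 1)
    (ρ : Matrix (Fin m) (Fin m) ℂ)
    (hρdef : ρ = ptraceR (Matrix.of fun p q => ψ p * star (ψ q))) :
    Real.log ((star ψ ⬝ᵥ ((matPinv ρ ⊗ₖ (1 : Matrix (Fin n) (Fin n) ℂ)) *ᵥ ψ)).re) =
      Real.log ρ.rank ∧
    0 ≤ Real.log ρ.rank ∧
    (0 < Real.log ρ.rank ↔ 1 < ρ.rank) :=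
  stmt5_general ψ ρ hρdef

end
end

section
/- Belavkin–Staszewski relative entropy positivity: for density matrices ω, φ on ℂ^d with φ positive definite, R(ω:φ) := Tr ω log( ω^{1/2} φ⁻¹ ω^{1/2} ) ≥ 0, with equality if ω = φ. -/
open Matrix Kronecker
open scoped ComplexOrder

noncomputable section
open Classical

/-!
Write `S = ω^{1/2}`, `A = S φ⁻¹ S` and `A⁺` for the pseudoinverse of `A`. From
`log x ≥ 1 - x⁻¹` for `x > 0` (both sides of `log x ≥ x x⁻¹ - x⁻¹` vanish at `0`) we get
`log A ≥ A A⁺ - A⁺` in the Loewner order, hence `R(ω:φ) ≥ Tr ω A A⁺ - Tr ω A⁺`. With `C = φ^{-1/2} S` we have `A = C^* C`; the identity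
`C A A⁺ = C` gives `ω A A⁺ = ω`, and since `C A⁺ C^*` is an orthogonal projection,
`Tr ω A⁺ = Tr (φ · C A⁺ C^*) ≤ Tr φ`. So `R(ω:φ) ≥ Tr ω - Tr φ = 0`.
-/

open scoped MatrixOrder

lemma matCFC_eq_cfc {n : Type*} [Fintype n] [DecidableEq n] (f : ℝ → ℝ) (A : Matrix n n ℂ) :
    matCFC f A = cfc f A := by
  unfold matCFC
  split_ifs with hA
  · exact (hA.cfc_eq f).symm
  · exact (cfc_apply_of_not_predicate A hA).symm

lemma matSqrt_eq_sqrt {n : Type*} [Fintype n] [DecidableEq n] {A : Matrix n n ℂ}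
    (hA : A.PosSemidef) : matSqrt A = CFC.sqrt A := by
  rw [CFC.sqrt_eq_real_sqrt A hA.nonneg, cfcₙ_eq_cfc, hA.1.cfc_eq, matSqrt, dif_pos hA]
  rfl

namespace Matrix

variable {m n 𝕜 : Type*} [Fintype m] [Fintype n] [DecidableEq n] [RCLike 𝕜]

/-- The spectrum is finite, so this lets `cfc_cont_tac` discharge the continuity side goals of
the `cfc` lemmas even for `Real.log` and `(·⁻¹)`. -/
@[fun_prop]
lemma continuousOn_spectrum_real (f : ℝ → ℝ) (A : Matrix n n 𝕜) :
    ContinuousOn f (spectrum ℝ A) :=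
  A.finite_real_spectrum.continuousOn f

lemma mul_mul_cfc_inv {A : Matrix n n 𝕜} (hA : IsSelfAdjoint A) :
    A * (A * cfc (·⁻¹ : ℝ → ℝ) A) = A := by
  calc A * (A * cfc (·⁻¹ : ℝ → ℝ) A) = cfc (fun x : ℝ => x * (x * x⁻¹)) A := by
        rw [cfc_mul, cfc_mul, cfc_id' ℝ A]
    _ = cfc (fun x : ℝ => x) A := cfc_congr fun x _ => by
        rcases eq_or_ne x 0 with rfl | _ <;> field_simp
    _ = A := cfc_id' ℝ A

lemma cfc_inv_mul_mul_cfc_inv {A : Matrix n n 𝕜} (hA : IsSelfAdjoint A) :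
    cfc (·⁻¹ : ℝ → ℝ) A * A * cfc (·⁻¹ : ℝ → ℝ) A = cfc (·⁻¹ : ℝ → ℝ) A := by
  calc cfc (·⁻¹ : ℝ → ℝ) A * A * cfc (·⁻¹ : ℝ → ℝ) A = cfc (fun x : ℝ => x⁻¹ * x * x⁻¹) A := by
        rw [cfc_mul, cfc_mul, cfc_id' ℝ A]
    _ = cfc (·⁻¹ : ℝ → ℝ) A := cfc_congr fun x _ => by
        rcases eq_or_ne x 0 with rfl | _ <;> field_simp

lemma mul_conjTranspose_mul_self_mul_cfc_inv (C : Matrix m n 𝕜) :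
    C * (Cᴴ * C * cfc (·⁻¹ : ℝ → ℝ) (Cᴴ * C)) = C := by
  set P := Cᴴ * C * cfc (·⁻¹ : ℝ → ℝ) (Cᴴ * C)
  have hAP : Cᴴ * C * (1 - P) = 0 := by
    rw [mul_sub, mul_one, mul_mul_cfc_inv (isHermitian_conjTranspose_mul_self C).isSelfAdjoint,
      sub_self]
  have h : (C * (1 - P))ᴴ * (C * (1 - P)) = 0 := by
    rw [conjTranspose_mul, Matrix.mul_assoc, ← Matrix.mul_assoc Cᴴ, hAP, Matrix.mul_zero]
  rw [conjTranspose_mul_self_eq_zero, Matrix.mul_sub, Matrix.mul_one, sub_eq_zero] at h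
  exact h.symm

lemma isStarProjection_mul_cfc_inv_mul_conjTranspose (C : Matrix m n 𝕜) :
    IsStarProjection (C * cfc (·⁻¹ : ℝ → ℝ) (Cᴴ * C) * Cᴴ) where
  isIdempotentElem := by
    rw [IsIdempotentElem]
    conv_rhs => rw [← cfc_inv_mul_mul_cfc_inv (isHermitian_conjTranspose_mul_self C).isSelfAdjoint]
    simp only [Matrix.mul_assoc]
  isSelfAdjoint := by
    have h : (cfc (·⁻¹ : ℝ → ℝ) (Cᴴ * C))ᴴ = cfc (·⁻¹ : ℝ → ℝ) (Cᴴ * C) :=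
      (cfc_predicate _ _ : IsSelfAdjoint _)
    rw [IsSelfAdjoint, star_eq_conjTranspose, conjTranspose_mul, conjTranspose_mul,
      conjTranspose_conjTranspose, h, Matrix.mul_assoc]

lemma PosSemidef.trace_mul_le_trace_mul_of_le {ω X Y : Matrix n n 𝕜} (hω : ω.PosSemidef)
    (h : X ≤ Y) : (ω * X).trace ≤ (ω * Y).trace := by
  have hS : star (CFC.sqrt ω) = CFC.sqrt ω := (CFC.sqrt_nonneg ω).isSelfAdjoint.star_eq
  have hconj (Z : Matrix n n 𝕜) :
      (ω * Z).trace = (star (CFC.sqrt ω) * Z * CFC.sqrt ω).trace := by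
    rw [hS, trace_mul_cycle, CFC.sqrt_mul_sqrt_self ω hω.nonneg]
  rw [hconj, hconj, ← sub_nonneg, ← trace_sub]
  exact (sub_nonneg.mpr (star_left_conjugate_le_conjugate h _)).posSemidef.trace_nonneg

lemma PosDef.exists_isSelfAdjoint_mul_self_eq_cfc_inv {φ : Matrix n n 𝕜} (hφ : φ.PosDef) :
    ∃ G : Matrix n n 𝕜, IsSelfAdjoint G ∧ G * G = cfc (·⁻¹ : ℝ → ℝ) φ ∧ G * φ * G = 1 := by
  have hpos : ∀ x ∈ spectrum ℝ φ, 0 < x := fun x hx => hφ.isStrictlyPositive.spectrum_pos hx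
  refine ⟨cfc (fun x : ℝ => (√x)⁻¹) φ, cfc_predicate _ _, ?_, ?_⟩
  · rw [← cfc_mul]
    refine cfc_congr fun x hx => ?_
    rw [← mul_inv, Real.mul_self_sqrt (hpos x hx).le]
  · calc cfc (fun x : ℝ => (√x)⁻¹) φ * φ * cfc (fun x : ℝ => (√x)⁻¹) φ
          = cfc (fun x : ℝ => (√x)⁻¹ * x * (√x)⁻¹) φ := by
            rw [cfc_mul, cfc_mul, cfc_id' ℝ φ]
      _ = cfc (fun _ : ℝ => 1) φ := cfc_congr fun x hx => by
            have := Real.sqrt_pos.2 (hpos x hx)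
            field_simp
            exact (Real.sq_sqrt (hpos x hx).le).symm
      _ = 1 := cfc_const_one ℝ φ

lemma PosSemidef.mul_cfc_inv_sub_cfc_inv_le_cfc_log {A : Matrix n n 𝕜} (hA : A.PosSemidef) :
    A * cfc (·⁻¹ : ℝ → ℝ) A - cfc (·⁻¹ : ℝ → ℝ) A ≤ cfc Real.log A := by
  calc A * cfc (·⁻¹ : ℝ → ℝ) A - cfc (·⁻¹ : ℝ → ℝ) A = cfc (fun x : ℝ => x * x⁻¹ - x⁻¹) A := by
        rw [cfc_sub, cfc_mul, cfc_id' ℝ A]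
    _ ≤ cfc Real.log A := cfc_mono fun x hx => by
        rcases (spectrum_nonneg_of_nonneg hA.nonneg hx).eq_or_lt with rfl | hx
        · simp
        · rw [mul_inv_cancel₀ hx.ne']
          exact Real.one_sub_inv_le_log_of_pos hx

lemma trace_sub_trace_le_trace_mul_cfc_log {S φ : Matrix n n 𝕜} (hS : IsSelfAdjoint S)
    (hφ : φ.PosDef) :
    (S * S).trace - φ.trace ≤
      (S * S * cfc Real.log (S * cfc (·⁻¹ : ℝ → ℝ) φ * S)).trace := by
  obtain ⟨G, hG, hGG, hGφG⟩ := hφ.exists_isSelfAdjoint_mul_self_eq_cfc_inv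
  have hφGG : φ * G * G = 1 := mul_eq_one_comm.mp (by rwa [← Matrix.mul_assoc])
  have hGS : (G * S)ᴴ = S * G := by
    rw [conjTranspose_mul, ← star_eq_conjTranspose, ← star_eq_conjTranspose, hS.star_eq,
      hG.star_eq]
  obtain ⟨A, hA, hSφS⟩ : ∃ A, A = (G * S)ᴴ * (G * S) ∧ S * cfc (·⁻¹ : ℝ → ℝ) φ * S = A :=
    ⟨_, rfl, by rw [hGS, ← hGG]; simp only [Matrix.mul_assoc]⟩
  rw [hSφS]
  have hsupp : S * (A * cfc (·⁻¹ : ℝ → ℝ) A) = S := by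
    have h := mul_conjTranspose_mul_self_mul_cfc_inv (G * S)
    rw [← hA] at h
    calc S * (A * cfc (·⁻¹ : ℝ → ℝ) A) = φ * G * (G * S * (A * cfc (·⁻¹ : ℝ → ℝ) A)) := by
          simp only [← Matrix.mul_assoc, hφGG, Matrix.one_mul]
      _ = S := by rw [h, ← Matrix.mul_assoc, hφGG, Matrix.one_mul]
  have hbound : (S * S * cfc (·⁻¹ : ℝ → ℝ) A).trace ≤ φ.trace := by
    have hQ := isStarProjection_mul_cfc_inv_mul_conjTranspose (G * S)
    rw [← hA, hGS] at hQ
    calc (S * S * cfc (·⁻¹ : ℝ → ℝ) A).trace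
        = (S * cfc (·⁻¹ : ℝ → ℝ) A * S * (G * φ * G)).trace := by
          rw [hGφG, Matrix.mul_one, trace_mul_cycle S _ S]
      _ = (φ * (G * S * cfc (·⁻¹ : ℝ → ℝ) A * (S * G))).trace := by
          rw [show S * cfc (·⁻¹ : ℝ → ℝ) A * S * (G * φ * G)
              = S * cfc (·⁻¹ : ℝ → ℝ) A * S * G * (φ * G) by simp only [Matrix.mul_assoc],
            trace_mul_comm]
          simp only [Matrix.mul_assoc]
      _ ≤ (φ * 1).trace := hφ.posSemidef.trace_mul_le_trace_mul_of_le hQ.le_one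
      _ = φ.trace := by rw [Matrix.mul_one]
  have hSS : (S * S).PosSemidef := by
    simpa [← star_eq_conjTranspose, hS.star_eq] using posSemidef_conjTranspose_mul_self S
  have hApsd : A.PosSemidef := hA ▸ posSemidef_conjTranspose_mul_self _
  calc (S * S).trace - φ.trace
      ≤ (S * S * (A * cfc (·⁻¹ : ℝ → ℝ) A)).trace - (S * S * cfc (·⁻¹ : ℝ → ℝ) A).trace := by
        rw [Matrix.mul_assoc S S, hsupp]
        exact sub_le_sub_left hbound _
    _ = (S * S * (A * cfc (·⁻¹ : ℝ → ℝ) A - cfc (·⁻¹ : ℝ → ℝ) A)).trace := by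
        rw [Matrix.mul_sub, trace_sub]
    _ ≤ (S * S * cfc Real.log A).trace :=
        hSS.trace_mul_le_trace_mul_of_le hApsd.mul_cfc_inv_sub_cfc_inv_le_cfc_log

end Matrix

section RBS

variable {n : Type*} [Fintype n] [DecidableEq n]

lemma RBS_eq_cfc {ω φ : Matrix n n ℂ} (hω : ω.PosSemidef) :
    RBS ω φ = (ω * cfc Real.log (CFC.sqrt ω * cfc (·⁻¹ : ℝ → ℝ) φ * CFC.sqrt ω)).trace.re := by
  rw [RBS, matLog, matPinv, matCFC_eq_cfc, matCFC_eq_cfc, matSqrt_eq_sqrt hω]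

lemma trace_sub_trace_le_RBS {ω φ : Matrix n n ℂ} (hω : ω.PosSemidef) (hφ : φ.PosDef) :
    ω.trace.re - φ.trace.re ≤ RBS ω φ := by
  have h := Matrix.trace_sub_trace_le_trace_mul_cfc_log (CFC.sqrt_nonneg ω).isSelfAdjoint hφ
  rw [CFC.sqrt_mul_sqrt_self ω hω.nonneg] at h
  rw [RBS_eq_cfc hω, ← Complex.sub_re]
  exact (Complex.le_def.1 h).1

lemma RBS_self {φ : Matrix n n ℂ} (hφ : φ.PosDef) : RBS φ φ = 0 := by
  have hpos : ∀ x ∈ spectrum ℝ φ, 0 < x := fun x hx => hφ.isStrictlyPositive.spectrum_pos hx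
  have hA : CFC.sqrt φ * cfc (·⁻¹ : ℝ → ℝ) φ * CFC.sqrt φ = 1 := by
    rw [CFC.sqrt_eq_real_sqrt φ hφ.posSemidef.nonneg, cfcₙ_eq_cfc, ← cfc_mul, ← cfc_mul]
    refine (cfc_congr fun x hx => ?_).trans (cfc_const_one ℝ φ)
    have := (hpos x hx).ne'
    field_simp
    exact Real.sq_sqrt (hpos x hx).le
  rw [RBS_eq_cfc hφ.posSemidef, hA, ← map_one (algebraMap ℝ (Matrix n n ℂ)), cfc_algebraMap,
    Real.log_one, map_zero, Matrix.mul_zero, Matrix.trace_zero, Complex.zero_re]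

end RBS

theorem stmt6 {d : ℕ} (ω φ : Matrix (Fin d) (Fin d) ℂ)
    (hω : ω.PosSemidef) (hωtr : ω.trace = 1)
    (hφ : φ.PosDef) (hφtr : φ.trace = 1) :
    0 ≤ RBS ω φ ∧ (ω = φ → RBS ω φ = 0) := by
  refine ⟨?_, fun h => by subst h; exact RBS_self hφ⟩
  have h := trace_sub_trace_le_RBS hω hφ
  rwa [hωtr, hφtr, sub_self] at h
end
end
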